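/- Let H be a Hopf algebra with invertible antipode, B a braided-commutative Yetter–Drinfeld H-module algebra. For a left H-comodule V with coaction ξ ↦ ξ₍₁₎ ⊗ ξ₍₂₎, define on the relative Hopf module X = V ⊗ B the map π(a)(ξ ⊗ b) = ξ₍₂₎ ⊗ (S⁻¹(ξ₍₁₎) ▷ a) b (extended B-linearly). Then π : B → End(X) is a unital algebra homomorphism, i.e. π(a a') = π(a) π(a') and π(1) = id. -/

import Mathlib

/-!
Write `π(a)` as the coaction twist `ξ ⊗ b ↦ ξ₍₂₎ ⊗ f_a(ξ₍₁₎) b` with `f_a(h) = (S⁻¹(h) ▷ a) · _`.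
Coassociativity of `V` turns the composite of the twists by `f` and `g` into the twist by
`h ↦ f(h₍₂₎) g(h₍₁₎)`, and counitality makes the twist by `ε` the identity. So
`π(a a') = π(a) π(a')` reduces to `S⁻¹(h) ▷ (a a') = (S⁻¹(h₍₂₎) ▷ a)(S⁻¹(h₍₁₎) ▷ a')`, which is
the module-algebra axiom combined with the anti-comultiplicativity of `S⁻¹`, and `π(1) = id`
reduces to `S⁻¹(h) ▷ 1 = ε(h)`.
-/

open TensorProduct LinearMap

noncomputable section

variable (k H B : Type) [Field k]
variable [Ring H] [HopfAlgebra k H] [Ring B] [Algebra k B]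

/-- The lifted action map `H ⊗ B → B`. -/
def actT (act : H →ₗ[k] B →ₗ[k] B) : H ⊗[k] B →ₗ[k] B := TensorProduct.lift act

/-- `(Δ x) ⊗ (a ⊗ b) ↦ (x₍₁₎ ▷ a)(x₍₂₎ ▷ b)`. -/
def maMap (act : H →ₗ[k] B →ₗ[k] B) : (H ⊗[k] H) ⊗[k] (B ⊗[k] B) →ₗ[k] B :=
  (LinearMap.mul' k B) ∘ₗ (TensorProduct.map (actT k H B act) (actT k H B act)) ∘ₗ
    (TensorProduct.tensorTensorTensorComm k H H B B).toLinearMap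

/-- `a ⊗ b ↦ b₍₂₎ (S⁻¹(b₍₁₎) ▷ a)`. -/
def braid (act : H →ₗ[k] B →ₗ[k] B) (Sinv : H →ₗ[k] H) (coact : B →ₗ[k] H ⊗[k] B) :
    B ⊗[k] B →ₗ[k] B :=
  (LinearMap.mul' k B) ∘ₗ (TensorProduct.comm k B B).toLinearMap
    ∘ₗ (TensorProduct.map (actT k H B act) LinearMap.id)
    ∘ₗ (TensorProduct.map (TensorProduct.map Sinv LinearMap.id) LinearMap.id)
    ∘ₗ (TensorProduct.map (TensorProduct.comm k B H).toLinearMap LinearMap.id)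
    ∘ₗ (TensorProduct.assoc k B H B).symm.toLinearMap
    ∘ₗ (TensorProduct.map LinearMap.id coact)

/-- `x ↦ x₍₁₎ ⊗ (x₍₂₎ ⊗ x₍₃₎)`. -/
def comul₂ : H →ₗ[k] H ⊗[k] (H ⊗[k] H) :=
  (TensorProduct.map LinearMap.id Coalgebra.comul) ∘ₗ Coalgebra.comul

/-- `(x₍₂₎ ⊗ x₍₃₎) ⊗ a₍₂₎ ↦ S(x₍₃₎) ⊗ (x₍₂₎ ▷ a₍₂₎)`. -/
def innerYD (act : H →ₗ[k] B →ₗ[k] B) : (H ⊗[k] H) ⊗[k] B →ₗ[k] H ⊗[k] B :=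
  (TensorProduct.map (HopfAlgebra.antipode (R := k)) (actT k H B act))
    ∘ₗ (TensorProduct.assoc k H H B).toLinearMap
    ∘ₗ (TensorProduct.map (TensorProduct.comm k H H).toLinearMap LinearMap.id)

/-- `x ⊗ a ↦ x₍₁₎ a₍₁₎ S(x₍₃₎) ⊗ (x₍₂₎ ▷ a₍₂₎)`, the right-hand side of the
Yetter–Drinfeld compatibility condition. -/
def rhsYD (act : H →ₗ[k] B →ₗ[k] B) (coact : B →ₗ[k] H ⊗[k] B) :
    H ⊗[k] B →ₗ[k] H ⊗[k] B :=
  (TensorProduct.map (LinearMap.mul' k H) LinearMap.id)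
    ∘ₗ (TensorProduct.assoc k H H B).symm.toLinearMap
    ∘ₗ (TensorProduct.map (LinearMap.mul' k H) (innerYD k H B act))
    ∘ₗ (TensorProduct.tensorTensorTensorComm k H (H ⊗[k] H) H B).toLinearMap
    ∘ₗ (TensorProduct.map (comul₂ k H) coact)

variable {k H B} in
/-- A braided-commutative Yetter–Drinfeld algebra structure on `B` over the Hopf
algebra `H` (with invertible antipode `Sinv`): `B` is a left `H`-module algebra
(action `act`), a left `H`-comodule algebra (coaction `coact`), the Yetter–Drinfeld
compatibility holds, and braided commutativity `a b = b₍₂₎ (S⁻¹(b₍₁₎) ▷ a)` holds. -/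
structure BraidedCommYD (act : H →ₗ[k] B →ₗ[k] B) (coact : B →ₗ[k] H ⊗[k] B)
    (Sinv : H →ₗ[k] H) : Prop where
  Sinv_antipode : ∀ x : H, Sinv (HopfAlgebra.antipode (R := k) x) = x
  antipode_Sinv : ∀ x : H, HopfAlgebra.antipode (R := k) (Sinv x) = x
  act_unit : ∀ a : B, act 1 a = a
  act_mulH : ∀ (x y : H) (a : B), act (x * y) a = act x (act y a)
  act_one : ∀ x : H, act x 1 = Coalgebra.counit (R := k) x • (1 : B)
  act_mul : ∀ (x : H) (a b : B),
    act x (a * b) = maMap k H B act (Coalgebra.comul x ⊗ₜ[k] (a ⊗ₜ[k] b))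
  coact_one : coact 1 = 1
  coact_mul : ∀ a b : B, coact (a * b) = coact a * coact b
  coact_coassoc : ∀ a : B,
    (TensorProduct.map Coalgebra.comul LinearMap.id) (coact a)
      = (TensorProduct.assoc k H H B).symm ((TensorProduct.map LinearMap.id coact) (coact a))
  coact_counit : ∀ a : B,
    (TensorProduct.lid k B) ((TensorProduct.map (Coalgebra.counit (R := k)) LinearMap.id) (coact a)) = a
  yd : ∀ (x : H) (a : B), coact (act x a) = rhsYD k H B act coact (x ⊗ₜ[k] a)
  braided : ∀ a b : B, a * b = braid k H B act Sinv coact (a ⊗ₜ[k] b)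

variable (V W : Type) [AddCommGroup V] [Module k V] [AddCommGroup W] [Module k W]

/-- `a ⊗ (h ⊗ b) ↦ (S⁻¹(h) ▷ a) b`. -/
def innerPi (act : H →ₗ[k] B →ₗ[k] B) (Sinv : H →ₗ[k] H) :
    B ⊗[k] (H ⊗[k] B) →ₗ[k] B :=
  (LinearMap.mul' k B)
    ∘ₗ (TensorProduct.map (actT k H B act) LinearMap.id)
    ∘ₗ (TensorProduct.map (TensorProduct.comm k B H).toLinearMap LinearMap.id)
    ∘ₗ (TensorProduct.assoc k B H B).symm.toLinearMap
    ∘ₗ (TensorProduct.map LinearMap.id (TensorProduct.map Sinv LinearMap.id))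

/-- The left `B`-action `π(a)(ξ ⊗ b) = ξ₍₂₎ ⊗ (S⁻¹(ξ₍₁₎) ▷ a) b` on the relative Hopf
module `V ⊗ B`, as a map `B ⊗ (V ⊗ B) → V ⊗ B`. -/
def piMap (act : H →ₗ[k] B →ₗ[k] B) (Sinv : H →ₗ[k] H)
    (coactV : V →ₗ[k] H ⊗[k] V) : B ⊗[k] (V ⊗[k] B) →ₗ[k] V ⊗[k] B :=
  (TensorProduct.map LinearMap.id (innerPi k H B act Sinv))
    ∘ₗ (TensorProduct.leftComm k B V (H ⊗[k] B)).toLinearMap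
    ∘ₗ (TensorProduct.map LinearMap.id (TensorProduct.assoc k V H B).toLinearMap)
    ∘ₗ (TensorProduct.map LinearMap.id
          (TensorProduct.map (TensorProduct.comm k H V).toLinearMap LinearMap.id))
    ∘ₗ (TensorProduct.map LinearMap.id (TensorProduct.map coactV LinearMap.id))

/-- The map `π : B → End(V ⊗ B)`, `π(a)(ξ ⊗ b) = ξ₍₂₎ ⊗ (S⁻¹(ξ₍₁₎) ▷ a) b`. -/
def piAct (act : H →ₗ[k] B →ₗ[k] B) (Sinv : H →ₗ[k] H)
    (coactV : V →ₗ[k] H ⊗[k] V) : B →ₗ[k] (V ⊗[k] B) →ₗ[k] (V ⊗[k] B) :=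
  TensorProduct.curry (piMap k H B V act Sinv coactV)

open WithConv Coalgebra HopfAlgebra

namespace HopfAlgebra
variable {R A : Type*} [CommSemiring R] [Semiring A] [HopfAlgebra R A]

lemma toConv_comul_eq_includeLeft_mul_includeRight :
    toConv (comul (R := R) (A := A)) =
      toConv (Algebra.TensorProduct.includeLeft : A →ₐ[R] A ⊗[R] A).toLinearMap *
        toConv (Algebra.TensorProduct.includeRight : A →ₐ[R] A ⊗[R] A).toLinearMap := by
  ext x
  rw [(ℛ R x).convMul_apply, ← (ℛ R x).eq]
  simp

lemma toConv_map_antipode_comp_comm_comp_comul :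
    toConv (map (antipode R) (antipode R) ∘ₗ (TensorProduct.comm R A A).toLinearMap ∘ₗ comul) =
      toConv ((Algebra.TensorProduct.includeRight : A →ₐ[R] A ⊗[R] A).toLinearMap ∘ₗ antipode R) *
        toConv ((Algebra.TensorProduct.includeLeft : A →ₐ[R] A ⊗[R] A).toLinearMap ∘ₗ
          antipode R) := by
  ext x
  rw [(ℛ R x).convMul_apply]
  simp [← (ℛ R x).eq, map_sum]

lemma algHom_comp_antipode_convMul_self {D : Type*} [Semiring D] [Algebra R D] (f : A →ₐ[R] D) :
    toConv (f.toLinearMap ∘ₗ antipode R) * toConv f.toLinearMap = 1 := by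
  have h := LinearMap.algHom_comp_convMul_distrib f (toConv (antipode R)) (toConv LinearMap.id)
  rw [LinearMap.antipode_mul_id] at h
  ext x
  simpa using (LinearMap.congr_fun h x).symm

/-- Both sides are convolution inverses of `comul`: the right-hand side is a left inverse since
`comul = ι₁ * ι₂` and it equals `(ι₂ ∘ S) * (ι₁ ∘ S)`. -/
theorem comul_comp_antipode :
    comul ∘ₗ antipode R =
      map (antipode R) (antipode R) ∘ₗ (TensorProduct.comm R A A).toLinearMap ∘ₗ
        comul (A := A) := by
  have hleft : toConv (map (antipode R) (antipode R) ∘ₗ (TensorProduct.comm R A A).toLinearMap ∘ₗ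
      comul (A := A)) * toConv comul = 1 := by
    rw [toConv_map_antipode_comp_comm_comp_comul, toConv_comul_eq_includeLeft_mul_includeRight,
      mul_assoc, ← mul_assoc (toConv (Algebra.TensorProduct.includeLeft.toLinearMap ∘ₗ _)),
      algHom_comp_antipode_convMul_self, one_mul, algHom_comp_antipode_convMul_self]
  exact congrArg ofConv (left_inv_eq_right_inv hleft LinearMap.comul_right_inv).symm

theorem comul_antipode_inverse_apply {Sinv : A →ₗ[R] A} (hS₁ : ∀ x, Sinv (antipode R x) = x)
    (hS₂ : ∀ x, antipode R (Sinv x) = x) (x : A) :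
    comul (Sinv x) = TensorProduct.comm R A A (map Sinv Sinv (comul x)) := by
  have h := LinearMap.congr_fun (comul_comp_antipode (R := R) (A := A)) (Sinv x)
  simp only [LinearMap.comp_apply, LinearEquiv.coe_coe, hS₂] at h
  have hSinv : Sinv ∘ₗ antipode R = LinearMap.id := LinearMap.ext hS₁
  rw [h, ← LinearMap.comp_apply (map Sinv Sinv), ← map_comp, hSinv, map_id, LinearMap.id_apply,
    TensorProduct.comm_comm]

theorem counit_antipode_inverse_apply {Sinv : A →ₗ[R] A} (hS : ∀ x, antipode R (Sinv x) = x)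
    (x : A) : counit (R := R) (Sinv x) = counit x := by
  simpa [hS] using (counit_antipode (R := R) (Sinv x)).symm

end HopfAlgebra

section CoactionTwist
variable {R C V M : Type*} [CommSemiring R] [AddCommMonoid C] [Module R C]
  [AddCommMonoid V] [Module R V] [AddCommMonoid M] [Module R M]

/-- `ξ ⊗ m ↦ ξ₍₂₎ ⊗ f(ξ₍₁₎) m`, where `ρ ξ = ξ₍₁₎ ⊗ ξ₍₂₎`. -/
def coactionTwist (ρ : V →ₗ[R] C ⊗[R] V) (f : C →ₗ[R] Module.End R M) :
    Module.End R (V ⊗[R] M) :=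
  lift (LinearMap.lTensorHom V ∘ₗ f) ∘ₗ (TensorProduct.assoc R C V M).toLinearMap ∘ₗ
    ρ.rTensor M

lemma coactionTwist_tmul (ρ : V →ₗ[R] C ⊗[R] V) (f : C →ₗ[R] Module.End R M) (v : V) (m : M) :
    coactionTwist ρ f (v ⊗ₜ m) =
      lift (LinearMap.lTensorHom V ∘ₗ f) (TensorProduct.assoc R C V M (ρ v ⊗ₜ m)) := rfl

theorem coactionTwist_comp [CoalgebraStruct R C] {ρ : V →ₗ[R] C ⊗[R] V}
    (hρ : ∀ v, map comul LinearMap.id (ρ v) =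
      (TensorProduct.assoc R C C V).symm (map LinearMap.id ρ (ρ v)))
    (f g : C →ₗ[R] Module.End R M) :
    coactionTwist ρ f ∘ₗ coactionTwist ρ g =
      coactionTwist ρ
        (LinearMap.mul' R _ ∘ₗ map f g ∘ₗ (TensorProduct.comm R C C).toLinearMap ∘ₗ comul) := by
  refine TensorProduct.ext' fun v m => ?_
  -- `Θ ((c₁ ⊗ c₂) ⊗ w) = w ⊗ f(c₂) (g(c₁) m)`
  let Θ : (C ⊗[R] C) ⊗[R] V →ₗ[R] V ⊗[R] M := (TensorProduct.comm R M V).toLinearMap ∘ₗ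
    (LinearMap.applyₗ m ∘ₗ LinearMap.mul' R _ ∘ₗ map f g ∘ₗ
      (TensorProduct.comm R C C).toLinearMap).rTensor V
  have hΘ : ∀ c w, Θ ((TensorProduct.assoc R C C V).symm (c ⊗ₜ ρ w)) =
      coactionTwist ρ f (w ⊗ₜ g c m) := by
    intro c w
    rw [coactionTwist_tmul]
    induction ρ w using TensorProduct.induction_on with
    | zero => simp
    | tmul c' w' => simp [Θ]
    | add s t hs ht => simp only [tmul_add, add_tmul, map_add, hs, ht]
  calc coactionTwist ρ f (coactionTwist ρ g (v ⊗ₜ m))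
      = Θ ((TensorProduct.assoc R C C V).symm (map LinearMap.id ρ (ρ v))) := by
        rw [coactionTwist_tmul]
        induction ρ v using TensorProduct.induction_on with
        | zero => simp
        | tmul c w => simp [hΘ]
        | add s t hs ht => simp only [add_tmul, map_add, hs, ht]
    _ = Θ (map comul LinearMap.id (ρ v)) := by rw [hρ]
    _ = _ := by
        rw [coactionTwist_tmul]
        induction ρ v using TensorProduct.induction_on with
        | zero => simp
        | tmul c w => simp [Θ]
        | add s t hs ht => simp only [add_tmul, map_add, hs, ht]

theorem coactionTwist_counit [CoalgebraStruct R C] {ρ : V →ₗ[R] C ⊗[R] V}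
    (hρ : ∀ v, TensorProduct.lid R V (map counit LinearMap.id (ρ v)) = v) :
    coactionTwist ρ (Algebra.linearMap R (Module.End R M) ∘ₗ counit) = LinearMap.id := by
  refine TensorProduct.ext' fun v m => ?_
  conv_rhs => rw [LinearMap.id_apply, ← hρ v]
  rw [coactionTwist_tmul]
  induction ρ v using TensorProduct.induction_on with
  | zero => simp
  | tmul c w => simp [smul_tmul]
  | add s t hs ht => simp only [add_tmul, map_add, hs, ht]

end CoactionTwist

section PiAct
variable {k H B V}

def piCoeff (act : H →ₗ[k] B →ₗ[k] B) (Sinv : H →ₗ[k] H) (a : B) : H →ₗ[k] Module.End k B :=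
  (Algebra.lmul k B).toLinearMap ∘ₗ act.flip a ∘ₗ Sinv

theorem piAct_eq_coactionTwist (act : H →ₗ[k] B →ₗ[k] B) (Sinv : H →ₗ[k] H)
    (coactV : V →ₗ[k] H ⊗[k] V) (a : B) :
    piAct k H B V act Sinv coactV a = coactionTwist coactV (piCoeff act Sinv a) := by
  refine TensorProduct.ext' fun ξ b => ?_
  simp only [piAct, _root_.piMap, TensorProduct.curry_apply, LinearMap.comp_apply,
    coactionTwist_tmul, map_tmul, LinearMap.id_apply, LinearEquiv.coe_coe]
  generalize coactV ξ = t
  induction t using TensorProduct.induction_on with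
  | zero => simp
  | tmul h v => simp [innerPi, actT, piCoeff]
  | add s t hs ht => simp only [add_tmul, tmul_add, map_add, hs, ht]

theorem act_flip_mul_comp_Sinv {act : H →ₗ[k] B →ₗ[k] B} {Sinv : H →ₗ[k] H}
    (hact : ∀ (x : H) (a b : B),
      act x (a * b) = maMap k H B act (Coalgebra.comul x ⊗ₜ[k] (a ⊗ₜ[k] b)))
    (hS₁ : ∀ x, Sinv (antipode k x) = x) (hS₂ : ∀ x, antipode k (Sinv x) = x) (a a' : B) :
    act.flip (a * a') ∘ₗ Sinv = LinearMap.mul' k B ∘ₗ map (act.flip a ∘ₗ Sinv) (act.flip a' ∘ₗ Sinv)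
      ∘ₗ (TensorProduct.comm k H H).toLinearMap ∘ₗ comul := by
  ext h
  simp only [LinearMap.comp_apply, LinearMap.flip_apply, hact, comul_antipode_inverse_apply hS₁ hS₂]
  induction comul (R := k) h using TensorProduct.induction_on with
  | zero => simp
  | tmul x y => simp [maMap, actT]
  | add s t hs ht => simp only [add_tmul, map_add, hs, ht]

theorem piCoeff_mul {act : H →ₗ[k] B →ₗ[k] B} {Sinv : H →ₗ[k] H}
    (hact : ∀ (x : H) (a b : B),
      act x (a * b) = maMap k H B act (Coalgebra.comul x ⊗ₜ[k] (a ⊗ₜ[k] b)))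
    (hS₁ : ∀ x, Sinv (antipode k x) = x) (hS₂ : ∀ x, antipode k (Sinv x) = x) (a a' : B) :
    piCoeff act Sinv (a * a') = LinearMap.mul' k _ ∘ₗ map (piCoeff act Sinv a) (piCoeff act Sinv a')
      ∘ₗ (TensorProduct.comm k H H).toLinearMap ∘ₗ comul := by
  rw [piCoeff, act_flip_mul_comp_Sinv hact hS₁ hS₂, ← LinearMap.comp_assoc, AlgHom.comp_mul']
  simp only [piCoeff, map_comp, LinearMap.comp_assoc]

theorem piCoeff_one {act : H →ₗ[k] B →ₗ[k] B} {Sinv : H →ₗ[k] H}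
    (hone : ∀ x : H, act x 1 = Coalgebra.counit (R := k) x • (1 : B))
    (hS : ∀ x, antipode k (Sinv x) = x) :
    piCoeff act Sinv 1 = Algebra.linearMap k (Module.End k B) ∘ₗ counit := by
  ext h b
  simp [piCoeff, hone, counit_antipode_inverse_apply hS]

end PiAct

theorem piAct_algebra_homomorphism
    (act : H →ₗ[k] B →ₗ[k] B) (coact : B →ₗ[k] H ⊗[k] B) (Sinv : H →ₗ[k] H)
    (hYD : BraidedCommYD act coact Sinv)
    (coactV : V →ₗ[k] H ⊗[k] V)
    (coactV_coassoc : ∀ v : V,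
      (TensorProduct.map Coalgebra.comul LinearMap.id) (coactV v)
        = (TensorProduct.assoc k H H V).symm ((TensorProduct.map LinearMap.id coactV) (coactV v)))
    (coactV_counit : ∀ v : V,
      (TensorProduct.lid k V)
        ((TensorProduct.map (Coalgebra.counit (R := k)) LinearMap.id) (coactV v)) = v) :
    (∀ a a' : B, piAct k H B V act Sinv coactV (a * a')
        = (piAct k H B V act Sinv coactV a) ∘ₗ (piAct k H B V act Sinv coactV a')) ∧
    piAct k H B V act Sinv coactV 1 = LinearMap.id := by
  refine ⟨fun a a' => ?_, ?_⟩
  · simp only [piAct_eq_coactionTwist, coactionTwist_comp coactV_coassoc,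
      piCoeff_mul hYD.act_mul hYD.Sinv_antipode hYD.antipode_Sinv]
  · rw [piAct_eq_coactionTwist, piCoeff_one hYD.act_one hYD.antipode_Sinv,
      coactionTwist_counit coactV_counit]
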